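/- arXiv:2106.15592 — 5 statements merged into one kernel-verified Lean document; each statement's English description precedes it below -/
import Mathlib

section
/- Given a short exact sequence 0 → A → B → C → 0 of modules which remains exact after applying Hom(X,−) for every X in the class X, if A and C belong to the X-precover completing domain of a module M, then so does B. -/
open CategoryTheory

universe u

variable {R : Type u} [Ring R]

/-- `g : X₀ ⟶ N` is an `𝒳`-precover of `N`. -/
def IsPrecover (𝒳 : ModuleCat.{u} R → Prop) {X₀ N : ModuleCat.{u} R} (g : X₀ ⟶ N) : Prop :=
  𝒳 X₀ ∧ ∀ X' : ModuleCat.{u} R, 𝒳 X' → ∀ f : X' ⟶ N, ∃ h : X' ⟶ X₀, h ≫ g = f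

/-- `𝒳` is a precovering class of left `R`-modules, closed under isomorphisms,
finite direct sums and direct summands. -/
structure PrecoveringClass (𝒳 : ModuleCat.{u} R → Prop) : Prop where
  precovering : ∀ N : ModuleCat.{u} R, ∃ (X₀ : ModuleCat.{u} R) (g : X₀ ⟶ N), IsPrecover 𝒳 g
  iso_closed : ∀ A B : ModuleCat.{u} R, Nonempty (A ≅ B) → 𝒳 A → 𝒳 B
  sum_closed : ∀ A B : ModuleCat.{u} R, 𝒳 A → 𝒳 B → 𝒳 (ModuleCat.of R (↥A × ↥B))
  summand_closed : ∀ A B : ModuleCat.{u} R, 𝒳 (ModuleCat.of R (↥A × ↥B)) → 𝒳 A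

/-- `N` belongs to the `𝒳`-precover completing domain `𝒳⁻¹(M)` of `M`:
every morphism `M ⟶ N` factors through a module in `𝒳`. -/
def MemDom (𝒳 : ModuleCat.{u} R → Prop) (M N : ModuleCat.{u} R) : Prop :=
  ∀ f : M ⟶ N, ∃ (X₀ : ModuleCat.{u} R) (h : M ⟶ X₀) (k : X₀ ⟶ N), 𝒳 X₀ ∧ h ≫ k = f

/-!
Given `f : M ⟶ B`, factor `f ≫ p` through some `X₀ ∈ 𝒳` as `h₀ ≫ k₀` and lift `k₀` along `p`
to `g : X₀ ⟶ B`. Then `f - h₀ ≫ g` is killed by `p`, so it equals `f' ≫ i` for some `f' : M ⟶ A`,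
which factors through `𝒳` because `A ∈ 𝒳⁻¹(M)`. Thus `f = h₀ ≫ g + f' ≫ i` factors through
a direct sum of two modules in `𝒳`.
-/

def FactorsThroughClass (𝒳 : ModuleCat.{u} R → Prop) {M N : ModuleCat.{u} R} (f : M ⟶ N) :
    Prop :=
  ∃ (X₀ : ModuleCat.{u} R) (h : M ⟶ X₀) (k : X₀ ⟶ N), 𝒳 X₀ ∧ h ≫ k = f

namespace FactorsThroughClass

variable {𝒳 : ModuleCat.{u} R → Prop} {M N : ModuleCat.{u} R}

lemma of_comp {X₀ : ModuleCat.{u} R} (hX₀ : 𝒳 X₀) (h : M ⟶ X₀) (k : X₀ ⟶ N) :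
    FactorsThroughClass 𝒳 (h ≫ k) :=
  ⟨X₀, h, k, hX₀, rfl⟩

lemma comp {f : M ⟶ N} (hf : FactorsThroughClass 𝒳 f) {P : ModuleCat.{u} R} (g : N ⟶ P) :
    FactorsThroughClass 𝒳 (f ≫ g) := by
  obtain ⟨X₀, h, k, hX₀, rfl⟩ := hf
  exact ⟨X₀, h, k ≫ g, hX₀, by simp⟩

lemma add (hsum : ∀ A B : ModuleCat.{u} R, 𝒳 A → 𝒳 B → 𝒳 (ModuleCat.of R (↥A × ↥B)))
    {f₁ f₂ : M ⟶ N} (hf₁ : FactorsThroughClass 𝒳 f₁) (hf₂ : FactorsThroughClass 𝒳 f₂) :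
    FactorsThroughClass 𝒳 (f₁ + f₂) := by
  obtain ⟨X₁, h₁, k₁, hX₁, rfl⟩ := hf₁
  obtain ⟨X₂, h₂, k₂, hX₂, rfl⟩ := hf₂
  refine ⟨ModuleCat.of R (↥X₁ × ↥X₂), ModuleCat.ofHom (h₁.hom.prod h₂.hom),
    ModuleCat.ofHom (k₁.hom.coprod k₂.hom), hsum X₁ X₂ hX₁ hX₂, ?_⟩
  ext m
  simp

end FactorsThroughClass

lemma ModuleCat.exists_lift_of_exact {A B C M : ModuleCat.{u} R} {i : A ⟶ B} {p : B ⟶ C}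
    (hi : Function.Injective i) (hex : Function.Exact i p) (f : M ⟶ B) (hf : f ≫ p = 0) :
    ∃ f' : M ⟶ A, f' ≫ i = f := by
  let S := ShortComplex.mk i p (by ext a; exact hex.apply_apply_eq_zero a)
  have hS : S.Exact := (ShortComplex.ShortExact.moduleCat_exact_iff_function_exact S).mpr hex
  have : Mono S.f := (ModuleCat.mono_iff_injective i).mpr hi
  exact ⟨hS.lift f hf, hS.lift_f f hf⟩

theorem stmt_2_general (𝒳 : ModuleCat.{u} R → Prop) (h𝒳 : PrecoveringClass 𝒳)
    (M A B C : ModuleCat.{u} R) (i : A ⟶ B) (p : B ⟶ C)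
    (hi : Function.Injective i) (hex : Function.Exact ⇑i ⇑p)
    (hhom : ∀ X' : ModuleCat.{u} R, 𝒳 X' → ∀ f : X' ⟶ C, ∃ g : X' ⟶ B, g ≫ p = f)
    (hA : MemDom 𝒳 M A) (hC : MemDom 𝒳 M C) : MemDom 𝒳 M B := by
  intro f
  obtain ⟨X₀, h₀, k₀, hX₀, hfac₀⟩ := hC (f ≫ p)
  obtain ⟨g, hg⟩ := hhom X₀ hX₀ k₀
  obtain ⟨f', hf'⟩ := ModuleCat.exists_lift_of_exact hi hex (f - h₀ ≫ g)
    (by rw [Preadditive.sub_comp, Category.assoc, hg, hfac₀, sub_self])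
  have hsplit : f = h₀ ≫ g + f' ≫ i := by rw [hf', add_sub_cancel]
  rw [hsplit]
  exact (FactorsThroughClass.of_comp hX₀ h₀ g).add h𝒳.sum_closed (.comp (hA f') i)

theorem stmt_2 (𝒳 : ModuleCat.{u} R → Prop) (h𝒳 : PrecoveringClass 𝒳)
    (M A B C : ModuleCat.{u} R) (i : A ⟶ B) (p : B ⟶ C)
    (hi : Function.Injective i) (hp : Function.Surjective p) (hex : Function.Exact ⇑i ⇑p)
    (hhom : ∀ X' : ModuleCat.{u} R, 𝒳 X' → ∀ f : X' ⟶ C, ∃ g : X' ⟶ B, g ≫ p = f)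
    (hA : MemDom 𝒳 M A) (hC : MemDom 𝒳 M C) : MemDom 𝒳 M B :=
  stmt_2_general 𝒳 h𝒳 M A B C i p hi hex hhom hA hC
end

section
/- For a finite family of modules N₁,...,Nₘ, each Nᵢ belongs to the X-precover completing domain of M if and only if the direct sum N₁ ⊕ ... ⊕ Nₘ belongs to the X-precover completing domain of M. -/
/-!
`𝒳⁻¹(M)` is closed under retracts: a factorisation of `f ≫ i` through a module of `𝒳` gives
one of `f` after composing with `r`. Since each `Nᵢ` is a retract of `⨁ Nⱼ`, this gives one
direction. For the other, factorisations `M ⟶ X₁ ⟶ A` and `M ⟶ X₂ ⟶ B` of the components of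
`f : M ⟶ A × B` assemble to one through `X₁ × X₂`, and induction on `m` finishes; the empty
sum is zero, so maps into it factor through any module of `𝒳`, which exists as `𝒳` is
precovering.
-/

open CategoryTheory

universe u

variable {R : Type u} [Ring R]

namespace MemDom

variable {𝒳 : ModuleCat.{u} R → Prop} {M : ModuleCat.{u} R}

theorem of_retract {N N' : ModuleCat.{u} R} (e : Retract N N') (h : MemDom 𝒳 M N') :
    MemDom 𝒳 M N := fun f => by
  obtain ⟨X₀, g, k, hX₀, hgk⟩ := h (f ≫ e.i)
  exact ⟨X₀, g, k ≫ e.r, hX₀, by rw [← Category.assoc, hgk, Category.assoc, e.retract,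
    Category.comp_id]⟩

theorem of_iso {N N' : ModuleCat.{u} R} (e : N' ≅ N) (h : MemDom 𝒳 M N') : MemDom 𝒳 M N :=
  of_retract e.symm.retract h

theorem of_subsingleton {N : ModuleCat.{u} R} [Subsingleton N] (h𝒳 : ∃ X, 𝒳 X) :
    MemDom 𝒳 M N := fun f => by
  obtain ⟨X, hX⟩ := h𝒳
  exact ⟨X, 0, 0, hX, by ext; exact Subsingleton.elim _ _⟩

theorem prod (h𝒳 : ∀ A B : ModuleCat.{u} R, 𝒳 A → 𝒳 B → 𝒳 (ModuleCat.of R (A × B)))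
    {A B : ModuleCat.{u} R} (hA : MemDom 𝒳 M A) (hB : MemDom 𝒳 M B) :
    MemDom 𝒳 M (ModuleCat.of R (A × B)) := fun f => by
  obtain ⟨X₁, g₁, k₁, hX₁, hgk₁⟩ := hA (f ≫ ModuleCat.ofHom (LinearMap.fst R A B))
  obtain ⟨X₂, g₂, k₂, hX₂, hgk₂⟩ := hB (f ≫ ModuleCat.ofHom (LinearMap.snd R A B))
  refine ⟨ModuleCat.of R (X₁ × X₂), ModuleCat.ofHom (g₁.hom.prod g₂.hom),
    ModuleCat.ofHom (k₁.hom.prodMap k₂.hom), h𝒳 _ _ hX₁ hX₂, ?_⟩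
  ext x
  · exact ConcreteCategory.congr_hom hgk₁ x
  · exact ConcreteCategory.congr_hom hgk₂ x

theorem pi (h𝒳 : PrecoveringClass 𝒳) :
    ∀ {m : ℕ} {N : Fin m → ModuleCat.{u} R}, (∀ i, MemDom 𝒳 M (N i)) →
      MemDom 𝒳 M (ModuleCat.of R (∀ i, N i))
  | 0, _, _ =>
    of_subsingleton <| by
      obtain ⟨X, -, hX, -⟩ := h𝒳.precovering M
      exact ⟨X, hX⟩
  | _ + 1, N, hN =>
    of_iso (Fin.consLinearEquiv R fun i => N i).toModuleIso <|
      prod h𝒳.sum_closed (hN 0) (pi h𝒳 fun i => hN i.succ)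

end MemDom

def DirectSum.retractOf {ι : Type} [DecidableEq ι] (N : ι → ModuleCat.{u} R) (i : ι) :
    Retract (N i) (ModuleCat.of R (DirectSum ι fun i => N i)) where
  i := ModuleCat.ofHom (DirectSum.lof R ι (fun i => N i) i)
  r := ModuleCat.ofHom (DirectSum.component R ι (fun i => N i) i)
  retract := by ext x; exact DirectSum.component.lof_self (M := fun i => N i) R i x

theorem stmt_3 (𝒳 : ModuleCat.{u} R → Prop) (h𝒳 : PrecoveringClass 𝒳)
    (M : ModuleCat.{u} R) (m : ℕ) (N : Fin m → ModuleCat.{u} R) :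
    (∀ i, MemDom 𝒳 M (N i)) ↔
      MemDom 𝒳 M (ModuleCat.of R (DirectSum (Fin m) fun i => ↥(N i))) :=
  ⟨fun hN => MemDom.of_iso
      (DirectSum.linearEquivFunOnFintype R (Fin m) fun i => N i).symm.toModuleIso
      (MemDom.pi h𝒳 hN),
    fun h i => h.of_retract (DirectSum.retractOf N i)⟩
end

section
/- Let 0 → M → X₀ → M' → 0 be a short exact sequence with X₀ ∈ X. Then every module N with Ext¹(M',N) = 0 belongs to the X-precover completing domain of M. Moreover, if M → X₀ is an X-preenvelope, then every N in X⁻¹(M) with Ext¹(X₀,N) = 0 satisfies Ext¹(M',N) = 0. -/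
open CategoryTheory

universe u

variable {R : Type u} [Ring R]

/-- `Ext¹(A,B) = 0`, expressed by the splitting of every short exact sequence
`0 → B → E → A → 0`. -/
def Ext1Vanish (A B : ModuleCat.{u} R) : Prop :=
  ∀ (E : ModuleCat.{u} R) (i : B ⟶ E) (p : E ⟶ A),
    Function.Injective i → Function.Surjective p → Function.Exact ⇑i ⇑p →
      ∃ r : E ⟶ B, i ≫ r = 𝟙 B

/-!
Pushing `0 → M → X₀ → M' → 0` out along `f : M → N` gives an extension of `M'` by `N`; if it
splits, a retraction extends `f` over `α`, so `f` factors through `X₀ ∈ 𝒳`.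

Conversely, suppose every `M → N` extends over `α` (as it does when `N ∈ 𝒳⁻¹(M)` and `α` is an
`𝒳`-preenvelope) and `Ext¹(X₀, N) = 0`. Given an extension `0 → N → E → M' → 0`, its pullback
along `p` splits, so `p` lifts to `e : X₀ → E`. On `M`, `e` takes values in `N`; subtracting an
extension of this map over `α` makes `e` vanish on `M`, and it descends to a section of `E → M'`.
-/

open CategoryTheory.Limits

namespace CategoryTheory.ShortComplex

variable {C : Type*} [Category C] [Abelian C]

noncomputable abbrev pushoutAlong (S : ShortComplex C) {N : C} (f : S.X₁ ⟶ N) : ShortComplex C :=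
  ShortComplex.mk (pushout.inr S.f f)
    (pushout.desc (f := S.f) (g := f) S.g 0 (by rw [S.zero, comp_zero])) (pushout.inr_desc _ _ _)

lemma pushoutAlong_shortExact {S : ShortComplex C} (hS : S.ShortExact) {N : C} (f : S.X₁ ⟶ N) :
    (S.pushoutAlong f).ShortExact := by
  have := hS.mono_f
  have := hS.epi_g
  have : Epi (S.pushoutAlong f).g := epi_of_epi_fac (pushout.inl_desc _ _ _)
  refine .mk' (exact_of_g_is_cokernel _ (CokernelCofork.IsColimit.ofπ' _ _ fun k hk =>
    ⟨hS.exact.desc (pushout.inl _ _ ≫ k) ?_, ?_⟩)) inferInstance inferInstance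
  · rw [pushout.condition_assoc, hk, comp_zero]
  · apply pushout.hom_ext
    · rw [pushout.inl_desc_assoc, hS.exact.g_desc]
    · rw [pushout.inr_desc_assoc, zero_comp]
      exact hk.symm

noncomputable abbrev pullbackAlong (S : ShortComplex C) {X : C} (h : X ⟶ S.X₃) : ShortComplex C :=
  ShortComplex.mk (pullback.lift (f := S.g) (g := h) S.f 0 (by rw [S.zero, zero_comp]))
    (pullback.snd S.g h) (pullback.lift_snd _ _ _)

lemma pullbackAlong_shortExact {S : ShortComplex C} (hS : S.ShortExact) {X : C} (h : X ⟶ S.X₃) :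
    (S.pullbackAlong h).ShortExact := by
  have := hS.mono_f
  have := hS.epi_g
  have : Mono (S.pullbackAlong h).f := mono_of_mono_fac (pullback.lift_fst _ _ _)
  refine .mk' (exact_of_f_is_kernel _ (KernelFork.IsLimit.ofι' _ _ fun k hk =>
    ⟨hS.exact.lift (k ≫ pullback.fst _ _) ?_, ?_⟩)) inferInstance inferInstance
  · rw [Category.assoc, pullback.condition, reassoc_of% hk, zero_comp]
  · apply pullback.hom_ext
    · rw [Category.assoc, pullback.lift_fst, hS.exact.lift_f]
    · rw [Category.assoc, pullback.lift_snd, comp_zero]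
      exact hk.symm

end CategoryTheory.ShortComplex

open ShortComplex

lemma Ext1Vanish.exists_retraction {S : ShortComplex (ModuleCat.{u} R)} (hS : S.ShortExact)
    (h : Ext1Vanish S.X₃ S.X₁) : ∃ r : S.X₂ ⟶ S.X₁, S.f ≫ r = 𝟙 S.X₁ :=
  h S.X₂ S.f S.g hS.moduleCat_injective_f hS.moduleCat_surjective_g
    ((ShortExact.moduleCat_exact_iff_function_exact S).mp hS.exact)

lemma ext1Vanish_of_exists_section {A B : ModuleCat.{u} R}
    (h : ∀ (E : ModuleCat.{u} R) (i : B ⟶ E) (π : E ⟶ A) (w : i ≫ π = 0),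
      (ShortComplex.mk i π w).ShortExact → ∃ s : A ⟶ E, s ≫ π = 𝟙 A) :
    Ext1Vanish A B := by
  intro E i π hi hπ hiπ
  have w : i ≫ π = 0 := by ext b; exact hiπ.apply_apply_eq_zero b
  have hS := ModuleCat.shortComplex_shortExact (ShortComplex.mk i π w) hiπ hi hπ
  obtain ⟨s, hs⟩ := h E i π w hS
  exact ⟨_, (Splitting.ofExactOfSection _ hS.exact s hs hS.mono_f).f_r⟩

lemma Ext1Vanish.exists_comp_eq {S : ShortComplex (ModuleCat.{u} R)} (hS : S.ShortExact)
    {N : ModuleCat.{u} R} (h : Ext1Vanish S.X₃ N) (f : S.X₁ ⟶ N) :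
    ∃ g : S.X₂ ⟶ N, S.f ≫ g = f := by
  obtain ⟨r, hr⟩ := h.exists_retraction (pushoutAlong_shortExact hS f)
  exact ⟨pushout.inl _ _ ≫ r, by rw [pushout.condition_assoc, hr, Category.comp_id]⟩

lemma Ext1Vanish.exists_lift {S : ShortComplex (ModuleCat.{u} R)} (hS : S.ShortExact)
    {X : ModuleCat.{u} R} (h : Ext1Vanish X S.X₁) (g : X ⟶ S.X₃) :
    ∃ e : X ⟶ S.X₂, e ≫ S.g = g := by
  have hT := pullbackAlong_shortExact hS g
  obtain ⟨r, hr⟩ := h.exists_retraction hT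
  let σ := Splitting.ofExactOfRetraction _ hT.exact r hr hT.epi_g
  exact ⟨σ.s ≫ pullback.fst S.g g, by
    rw [Category.assoc, pullback.condition, ← Category.assoc, σ.s_g, Category.id_comp]⟩

lemma ext1Vanish_of_forall_exists_comp_eq {S : ShortComplex (ModuleCat.{u} R)}
    (hS : S.ShortExact) {N : ModuleCat.{u} R} (h₂ : Ext1Vanish S.X₂ N)
    (hext : ∀ f : S.X₁ ⟶ N, ∃ g : S.X₂ ⟶ N, S.f ≫ g = f) : Ext1Vanish S.X₃ N := by
  refine ext1Vanish_of_exists_section fun E i π w hT => ?_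
  have := hT.mono_f
  have := hS.epi_g
  obtain ⟨e, he⟩ := h₂.exists_lift hT S.g
  obtain ⟨k, hk⟩ := hext (hT.exact.lift (S.f ≫ e) (by simp [he]))
  refine ⟨hS.exact.desc (e - k ≫ i) ?_, ?_⟩
  · rw [Preadditive.comp_sub, ← Category.assoc, hk, hT.exact.lift_f, sub_self]
  · rw [← cancel_epi S.g, hS.exact.g_desc_assoc, Preadditive.sub_comp, Category.assoc, w,
      comp_zero, sub_zero, he, Category.comp_id]

lemma MemDom.exists_comp_eq {𝒳 : ModuleCat.{u} R → Prop} {M X₀ N : ModuleCat.{u} R}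
    {α : M ⟶ X₀} (hα : ∀ X' : ModuleCat.{u} R, 𝒳 X' → ∀ f : M ⟶ X', ∃ g : X₀ ⟶ X', α ≫ g = f)
    (hN : MemDom 𝒳 M N) (f : M ⟶ N) : ∃ g : X₀ ⟶ N, α ≫ g = f := by
  obtain ⟨X', h, k, hX', rfl⟩ := hN f
  obtain ⟨g, rfl⟩ := hα X' hX' h
  exact ⟨g ≫ k, (Category.assoc _ _ _).symm⟩

theorem stmt_7_general (𝒳 : ModuleCat.{u} R → Prop)
    (M X₀ M' : ModuleCat.{u} R) (h₀ : 𝒳 X₀) (α : M ⟶ X₀) (p : X₀ ⟶ M')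
    (hα : Function.Injective α) (hp : Function.Surjective p)
    (hex : Function.Exact ⇑α ⇑p) :
    (∀ N : ModuleCat.{u} R, Ext1Vanish M' N → MemDom 𝒳 M N) ∧
      ((∀ X' : ModuleCat.{u} R, 𝒳 X' → ∀ f : M ⟶ X', ∃ g : X₀ ⟶ X', α ≫ g = f) →
        ∀ N : ModuleCat.{u} R, MemDom 𝒳 M N → Ext1Vanish X₀ N → Ext1Vanish M' N) := by
  have w : α ≫ p = 0 := by ext m; exact hex.apply_apply_eq_zero m
  have hS := ModuleCat.shortComplex_shortExact (ShortComplex.mk α p w) hex hα hp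
  refine ⟨fun N hN f => ?_, fun hpre N hN hX₀ => ?_⟩
  · obtain ⟨g, hg⟩ := hN.exists_comp_eq hS f
    exact ⟨X₀, α, g, h₀, hg⟩
  · exact ext1Vanish_of_forall_exists_comp_eq hS hX₀ (hN.exists_comp_eq hpre)

theorem stmt_7 (𝒳 : ModuleCat.{u} R → Prop) (h𝒳 : PrecoveringClass 𝒳)
    (M X₀ M' : ModuleCat.{u} R) (h₀ : 𝒳 X₀) (α : M ⟶ X₀) (p : X₀ ⟶ M')
    (hα : Function.Injective α) (hp : Function.Surjective p)
    (hex : Function.Exact ⇑α ⇑p) :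
    (∀ N : ModuleCat.{u} R, Ext1Vanish M' N → MemDom 𝒳 M N) ∧
      ((∀ X' : ModuleCat.{u} R, 𝒳 X' → ∀ f : M ⟶ X', ∃ g : X₀ ⟶ X', α ≫ g = f) →
        ∀ N : ModuleCat.{u} R, MemDom 𝒳 M N → Ext1Vanish X₀ N → Ext1Vanish M' N) :=
  stmt_7_general 𝒳 M X₀ M' h₀ α p hα hp hex
end

section
/- For a module M the following are equivalent: (1) M embeds in a module belonging to X; (2) there exists a module M' with M'^⊥ ⊆ X⁻¹(M); (3) every injective module belongs to X⁻¹(M); (4) the injective envelope E(M) belongs to X⁻¹(M). -/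
/-!
(1) ⇒ (2) with `M' = X₀ ⧸ M`: when `Ext¹(X₀ ⧸ M, N) = 0` the sequence
`0 → N → P → X₀ ⧸ M → 0`, with `P` the pushout of `M ↪ X₀` along `f : M → N`, splits, and the
retraction `P → N` restricted to `X₀` extends `f`. (2) ⇒ (3) ⇒ (4) because `Ext¹(-, E)` vanishes
for injective `E`. For (4) ⇒ (1), factor the inclusion `M ↪ E(M)` itself through a module of `X`.

The envelope `E(M)` is a maximal essential extension `N` of `M` inside an injective module `E`.
If `K` is maximal with `K ∩ N = 0`, then `N` embeds essentially into `E ⧸ K`; the extension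
`E ⧸ K → E` of `N ↪ E` is injective with image an essential extension of `N`, hence equal to `N`,
which makes `N` a retract of `E`.
-/

open CategoryTheory

universe u

variable {R : Type u} [Ring R]

theorem exists_maximal_disjoint {α : Type*} [CompleteLattice α] [IsCompactlyGenerated α]
    (a : α) : ∃ b, Maximal (Disjoint · a) b := by
  obtain ⟨b, -, hb⟩ := zorn_le_nonempty₀ {b | Disjoint b a}
    (fun c hc hchain y hy => ⟨sSup c, (hchain.directedOn.disjoint_sSup_left).2 hc,
      fun _ => le_sSup⟩) ⊥ disjoint_bot_left
  exact ⟨b, hb⟩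

universe v

theorem Module.Injective.of_retraction {E N : Type v} [AddCommGroup E] [Module R E]
    [AddCommGroup N] [Module R N] [Module.Injective R E] (s : N →ₗ[R] E) (r : E →ₗ[R] N)
    (hrs : ∀ x, r (s x) = x) : Module.Injective R N where
  out _ _ _ _ _ _ f hf g := by
    obtain ⟨h, hh⟩ := Module.Injective.out f hf (s ∘ₗ g)
    exact ⟨r ∘ₗ h, fun x => by simp [hh, hrs]⟩

namespace Submodule

variable {E F : Type*} [AddCommGroup E] [Module R E] [AddCommGroup F] [Module R F]

/-- Meant for `A ≤ N`; the inclusion is not part of the definition. -/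
def IsEssentialIn (A N : Submodule R E) : Prop :=
  ∀ x ∈ N, x ≠ 0 → ∃ r : R, r • x ≠ 0 ∧ r • x ∈ A

theorem isEssentialIn_refl (A : Submodule R E) : IsEssentialIn A A :=
  fun x hx hx0 => ⟨1, by rwa [one_smul], by rwa [one_smul]⟩

theorem IsEssentialIn.trans {A N P : Submodule R E} (hAN : IsEssentialIn A N)
    (hNP : IsEssentialIn N P) : IsEssentialIn A P := by
  intro x hx hx0
  obtain ⟨r, hr0, hrN⟩ := hNP x hx hx0
  obtain ⟨s, hs0, hsA⟩ := hAN _ hrN hr0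
  exact ⟨s * r, by rwa [mul_smul], by rwa [mul_smul]⟩

theorem IsEssentialIn.map {A N : Submodule R E} (h : IsEssentialIn A N) {f : E →ₗ[R] F}
    (hf : Function.Injective f) : IsEssentialIn (A.map f) (N.map f) := by
  rintro _ ⟨x, hx, rfl⟩ hx0
  obtain ⟨r, hr0, hrA⟩ := h x hx (fun h => hx0 (by rw [h, map_zero]))
  refine ⟨r, by rwa [← map_smul, ne_eq, map_eq_zero_iff f hf], ?_⟩
  rw [← map_smul]
  exact mem_map_of_mem hrA

theorem exists_maximal_isEssentialIn (A : Submodule R E) :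
    ∃ N, Maximal (fun N => A ≤ N ∧ IsEssentialIn A N) N := by
  obtain ⟨N, -, hN⟩ := zorn_le_nonempty₀ {N | A ≤ N ∧ IsEssentialIn A N}
    (fun c hc hchain y hy => by
      refine ⟨sSup c, ⟨(hc hy).1.trans (le_sSup hy), fun x hx hx0 => ?_⟩, fun _ => le_sSup⟩
      obtain ⟨N, hN, hxN⟩ := (mem_sSup_of_directed ⟨y, hy⟩ hchain.directedOn).1 hx
      exact (hc hN).2 x hxN hx0) A ⟨le_rfl, isEssentialIn_refl A⟩
  exact ⟨N, hN⟩

theorem isEssentialIn_map_mkQ_of_maximal_disjoint {N K : Submodule R E}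
    (hK : Maximal (Disjoint · N) K) : IsEssentialIn (N.map K.mkQ) ⊤ := by
  rintro z - hz
  obtain ⟨x, rfl⟩ := K.mkQ_surjective z
  have hxK : x ∉ K := fun h => hz ((Quotient.mk_eq_zero K).2 h)
  have hmeet : ¬Disjoint (K ⊔ span R {x}) N := fun hdisj =>
    hxK (hK.2 hdisj le_sup_left (le_sup_right (a := K) (mem_span_singleton_self x)))
  obtain ⟨y, ⟨hyKx, hyN⟩, hy0⟩ := exists_mem_ne_zero_of_ne_bot (disjoint_iff.not.1 hmeet)
  obtain ⟨k, hk, _, hw, rfl⟩ := mem_sup.1 hyKx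
  obtain ⟨r, rfl⟩ := mem_span_singleton.1 hw
  have hqy : K.mkQ (k + r • x) = r • K.mkQ x := by
    rw [map_add, map_smul, mkQ_apply, (Quotient.mk_eq_zero K).2 hk, zero_add]
  refine ⟨r, ?_, ?_⟩
  · rw [← hqy, ne_eq, mkQ_apply, Quotient.mk_eq_zero]
    exact fun hyK => hy0 ((disjoint_iff_inf_le.1 hK.1) ⟨hyK, hyN⟩)
  · rw [← hqy]
    exact mem_map_of_mem hyN

theorem injective_of_maximal_isEssentialIn [Module.Injective R E] {A N : Submodule R E}
    (hN : Maximal (fun N => A ≤ N ∧ IsEssentialIn A N) N) : Module.Injective R N := by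
  obtain ⟨K, hK⟩ := exists_maximal_disjoint N
  have hess := isEssentialIn_map_mkQ_of_maximal_disjoint hK
  have hj : Function.Injective (K.mkQ ∘ₗ N.subtype) := by
    refine (injective_iff_map_eq_zero _).2 fun x hx => Subtype.ext ?_
    exact (disjoint_iff_inf_le.1 hK.1) ⟨(Quotient.mk_eq_zero K).1 hx, x.2⟩
  obtain ⟨g, hg⟩ := Module.Injective.out (K.mkQ ∘ₗ N.subtype) hj N.subtype
  have hg_inj : Function.Injective g := by
    refine (injective_iff_map_eq_zero g).2 fun z hz => ?_
    by_contra hz0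
    obtain ⟨r, hr0, y, hyN, hy⟩ := hess z trivial hz0
    have hy0 : y = 0 := by
      rw [← show g (K.mkQ y) = y from hg ⟨y, hyN⟩, hy, map_smul, hz, smul_zero]
    exact hr0 (by rw [← hy, hy0, map_zero])
  have hgqN : (N.map K.mkQ).map g = N := by
    have hgq : (g ∘ₗ K.mkQ) ∘ₗ N.subtype = N.subtype := LinearMap.ext hg
    conv_lhs => rw [← N.map_subtype_top, ← map_comp, ← map_comp, hgq]
    exact N.map_subtype_top
  have hNg : N ≤ LinearMap.range g := by
    rw [← hgqN, LinearMap.range_eq_map]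
    exact map_mono le_top
  have hrange : LinearMap.range g = N := by
    have hNess : IsEssentialIn N (LinearMap.range g) := by
      rw [LinearMap.range_eq_map, ← hgqN]
      exact hess.map hg_inj
    exact le_antisymm (hN.2 ⟨hN.1.1.trans hNg, hN.1.2.trans hNess⟩ hNg) hNg
  exact Module.Injective.of_retraction N.subtype
    ((g ∘ₗ K.mkQ).codRestrict N fun x => hrange ▸ LinearMap.mem_range_self g _)
    fun x => Subtype.ext (hg x)

end Submodule

theorem ModuleCat.exists_injective_essential_extension (M : ModuleCat.{u} R) :
    ∃ (E : ModuleCat.{u} R) (i : M ⟶ E), Injective E ∧ Function.Injective i ∧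
      ∀ K : Submodule R E, K ≠ ⊥ → K ⊓ LinearMap.range i.hom ≠ ⊥ := by
  have hι : Function.Injective (Injective.ι M) :=
    (ModuleCat.mono_iff_injective _).1 inferInstance
  have := Module.injective_module_of_injective_object R (Injective.under M : ModuleCat.{u} R)
    (inj := Injective.injective_under M)
  obtain ⟨N, hN⟩ := (LinearMap.range (Injective.ι M).hom).exists_maximal_isEssentialIn
  have := Submodule.injective_of_maximal_isEssentialIn hN
  refine ⟨ModuleCat.of R N,
    ModuleCat.ofHom ((Injective.ι M).hom.codRestrict N fun m => hN.1.1 ⟨m, rfl⟩),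
    Module.injective_object_of_injective_module R N,
    fun a b hab => hι (congrArg Subtype.val hab), fun K hK => ?_⟩
  obtain ⟨x, hxK, hx0⟩ := Submodule.exists_mem_ne_zero_of_ne_bot hK
  obtain ⟨r, hr0, m, hm⟩ := hN.1.2 x x.2 (by simpa using hx0)
  rw [Submodule.ne_bot_iff]
  exact ⟨r • x, ⟨K.smul_mem r hxK, m, Subtype.ext hm⟩, fun h => hr0 (congrArg Subtype.val h)⟩

namespace LinearMap

variable {M X N : Type*} [AddCommGroup M] [Module R M] [AddCommGroup X] [Module R X]
  [AddCommGroup N] [Module R N] (i : M →ₗ[R] X) (f : M →ₗ[R] N)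

abbrev pushout : Type _ := (X × N) ⧸ range (i.prod (-f))

def pushoutInl : X →ₗ[R] pushout i f := (range (i.prod (-f))).mkQ ∘ₗ inl R X N

def pushoutInr : N →ₗ[R] pushout i f := (range (i.prod (-f))).mkQ ∘ₗ inr R X N

def pushoutToCokernel : pushout i f →ₗ[R] X ⧸ range i :=
  (range (i.prod (-f))).liftQ ((range i).mkQ ∘ₗ fst R X N) <| by
    rintro _ ⟨m, rfl⟩
    simp

theorem pushoutInl_comp : pushoutInl i f ∘ₗ i = pushoutInr i f ∘ₗ f :=
  ext fun m => (Submodule.Quotient.eq _).2 ⟨m, by simp⟩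

variable {i f}

theorem pushoutInr_injective (hi : Function.Injective i) :
    Function.Injective (pushoutInr i f) := by
  refine (injective_iff_map_eq_zero _).2 fun n hn => ?_
  obtain ⟨m, hm⟩ := (Submodule.Quotient.mk_eq_zero _).1 hn
  have him : i m = 0 := congrArg Prod.fst hm
  have hfm : -f m = n := congrArg Prod.snd hm
  rw [← hfm, (injective_iff_map_eq_zero i).1 hi m him, map_zero, neg_zero]

variable (i f)

theorem pushoutToCokernel_surjective : Function.Surjective (pushoutToCokernel i f) := by
  intro y
  obtain ⟨x, rfl⟩ := (range i).mkQ_surjective y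
  exact ⟨pushoutInl i f x, rfl⟩

theorem exact_pushoutInr_pushoutToCokernel :
    Function.Exact (pushoutInr i f) (pushoutToCokernel i f) := by
  intro e
  obtain ⟨⟨x, n⟩, rfl⟩ := (range (i.prod (-f))).mkQ_surjective e
  change (range i).mkQ x = 0 ↔ _
  rw [Submodule.mkQ_apply, Submodule.Quotient.mk_eq_zero]
  constructor
  · rintro ⟨m, rfl⟩
    exact ⟨n + f m, (Submodule.Quotient.eq _).2 ⟨-m, by simp⟩⟩
  · rintro ⟨n', hn'⟩
    obtain ⟨m, hm⟩ := (Submodule.Quotient.eq _).1 hn'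
    have him : i m = 0 - x := congrArg Prod.fst hm
    exact ⟨-m, by rw [map_neg, him, zero_sub, neg_neg]⟩

end LinearMap

theorem ext1Vanish_of_injective (A N : ModuleCat.{u} R) [Injective N] : Ext1Vanish A N :=
  fun _ i _ hi _ _ =>
    have : Mono i := (ModuleCat.mono_iff_injective i).2 hi
    ⟨Injective.factorThru (𝟙 N) i, Injective.comp_factorThru (𝟙 N) i⟩

theorem Ext1Vanish.exists_comp_eq_s8 {M X₀ N : ModuleCat.{u} R} {i : M ⟶ X₀}
    (hi : Function.Injective i) (hN : Ext1Vanish (ModuleCat.of R (X₀ ⧸ LinearMap.range i.hom)) N)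
    (f : M ⟶ N) : ∃ k : X₀ ⟶ N, i ≫ k = f := by
  obtain ⟨r, hr⟩ := hN (ModuleCat.of R (LinearMap.pushout i.hom f.hom))
    (ModuleCat.ofHom (LinearMap.pushoutInr i.hom f.hom))
    (ModuleCat.ofHom (LinearMap.pushoutToCokernel i.hom f.hom))
    (LinearMap.pushoutInr_injective hi) (LinearMap.pushoutToCokernel_surjective _ _)
    (LinearMap.exact_pushoutInr_pushoutToCokernel _ _)
  have hsq : i ≫ ModuleCat.ofHom (LinearMap.pushoutInl i.hom f.hom) =
      f ≫ ModuleCat.ofHom (LinearMap.pushoutInr i.hom f.hom) :=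
    ModuleCat.hom_ext (LinearMap.pushoutInl_comp i.hom f.hom)
  exact ⟨ModuleCat.ofHom (LinearMap.pushoutInl i.hom f.hom) ≫ r, by
    rw [← Category.assoc, hsq, Category.assoc, hr, Category.comp_id]⟩

theorem stmt_8_general (𝒳 : ModuleCat.{u} R → Prop) (M : ModuleCat.{u} R) :
    [∃ (X₀ : ModuleCat.{u} R) (i : M ⟶ X₀), 𝒳 X₀ ∧ Function.Injective i,
      ∃ M' : ModuleCat.{u} R, ∀ N : ModuleCat.{u} R, Ext1Vanish M' N → MemDom 𝒳 M N,
      ∀ N : ModuleCat.{u} R, Injective N → MemDom 𝒳 M N,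
      ∀ (E : ModuleCat.{u} R) (i : M ⟶ E), Injective E → Function.Injective i →
        (∀ K : Submodule R ↥E, K ≠ ⊥ → K ⊓ LinearMap.range i.hom ≠ ⊥) →
          MemDom 𝒳 M E].TFAE := by
  tfae_have 1 → 2
  | ⟨X₀, i, hX₀, hi⟩ => ⟨ModuleCat.of R (X₀ ⧸ LinearMap.range i.hom), fun _ hN f =>
      have ⟨k, hk⟩ := hN.exists_comp_eq_s8 hi f
      ⟨X₀, i, k, hX₀, hk⟩⟩
  tfae_have 2 → 3
  | ⟨M', hM'⟩ => fun N _ => hM' N (ext1Vanish_of_injective M' N)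
  tfae_have 3 → 4
  | h3 => fun E _ hE _ _ => h3 E hE
  tfae_have 4 → 1
  | h4 => by
    obtain ⟨E, i, hE, hi, hess⟩ := ModuleCat.exists_injective_essential_extension M
    obtain ⟨X₀, h, k, hX₀, rfl⟩ := h4 E i hE hi hess i
    exact ⟨X₀, h, hX₀, Function.Injective.of_comp (f := k) hi⟩
  tfae_finish

theorem stmt_8 (𝒳 : ModuleCat.{u} R → Prop) (h𝒳 : PrecoveringClass 𝒳) (M : ModuleCat.{u} R) :
    [∃ (X₀ : ModuleCat.{u} R) (i : M ⟶ X₀), 𝒳 X₀ ∧ Function.Injective i,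
      ∃ M' : ModuleCat.{u} R, ∀ N : ModuleCat.{u} R, Ext1Vanish M' N → MemDom 𝒳 M N,
      ∀ N : ModuleCat.{u} R, Injective N → MemDom 𝒳 M N,
      ∀ (E : ModuleCat.{u} R) (i : M ⟶ E), Injective E → Function.Injective i →
        (∀ K : Submodule R ↥E, K ≠ ⊥ → K ⊓ LinearMap.range i.hom ≠ ⊥) →
          MemDom 𝒳 M E].TFAE :=
  stmt_8_general 𝒳 M
end

section
/- A ring R is left perfect if and only if the flat-precover completing domain of every left R-module equals its subprojectivity domain, if and only if the flat-precover completing domain of every module is contained in its subprojectivity domain. -/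
/-!
Projective modules are flat: `W ⊗_R R^(ι) ≅ W^(ι)` naturally in `W`, so free modules are flat,
and flatness passes to direct summands. Hence `Pr⁻¹(M) ⊆ 𝔉⁻¹(M)` over every ring, and equality
holds when flat modules are projective. Conversely, a flat module `F` lies in `𝔉⁻¹(F)` (factor
any endomorphism through `F` itself), so if `𝔉⁻¹(F) ⊆ Pr⁻¹(F)` the identity of `F` factors
through a projective module, making `F` a direct summand of a projective module.
-/

open CategoryTheory

universe u

variable {R : Type u} [Ring R]

/-- The submodule of relations defining the balanced tensor product `W ⊗_R M` of a
right `R`-module `W` and a left `R`-module `M` as a quotient of `W ⊗_ℤ M`. -/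
abbrev tensorRel (W : Type u) [AddCommGroup W] [Module Rᵐᵒᵖ W]
    (M : Type u) [AddCommGroup M] [Module R M] : Submodule ℤ (TensorProduct ℤ W M) :=
  Submodule.span ℤ
    {x | ∃ (w : W) (r : R) (m : M), x = (MulOpposite.op r • w) ⊗ₜ[ℤ] m - w ⊗ₜ[ℤ] (r • m)}

/-- The balanced tensor product `W ⊗_R M` over the (possibly noncommutative) ring `R`. -/
abbrev RTensor (W : Type u) [AddCommGroup W] [Module Rᵐᵒᵖ W]
    (M : Type u) [AddCommGroup M] [Module R M] : Type u :=
  TensorProduct ℤ W M ⧸ tensorRel (R := R) W M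

/-- The map `W ⊗_R M → K ⊗_R M` induced by a morphism `i : W → K` of right
`R`-modules. -/
noncomputable def tensorMap {W K : Type u} [AddCommGroup W] [Module Rᵐᵒᵖ W]
    [AddCommGroup K] [Module Rᵐᵒᵖ K] (i : W →ₗ[Rᵐᵒᵖ] K)
    (M : Type u) [AddCommGroup M] [Module R M] :
    RTensor (R := R) W M →ₗ[ℤ] RTensor (R := R) K M :=
  Submodule.mapQ _ _ (LinearMap.rTensor M i.toAddMonoidHom.toIntLinearMap) (by
    refine Submodule.span_le.2 ?_
    rintro x ⟨w, r, m, rfl⟩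
    refine Submodule.mem_comap.2 (Submodule.subset_span ?_)
    refine ⟨i w, r, m, ?_⟩
    exact (map_sub (LinearMap.rTensor M i.toAddMonoidHom.toIntLinearMap) _ _).trans (by simp))

/-- `M` is a flat left `R`-module: tensoring with `M` preserves injectivity of
morphisms of right `R`-modules. -/
def IsFlat (M : Type u) [AddCommGroup M] [Module R M] : Prop :=
  ∀ (W K : Type u) [AddCommGroup W] [Module Rᵐᵒᵖ W] [AddCommGroup K] [Module Rᵐᵒᵖ K]
    (i : W →ₗ[Rᵐᵒᵖ] K), Function.Injective i → Function.Injective (tensorMap (R := R) i M)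

/-- `N` belongs to the flat-precover completing domain `𝔉⁻¹(M)` of `M`:
every morphism `M ⟶ N` factors through a flat module. -/
def FlatDom (M N : ModuleCat.{u} R) : Prop :=
  ∀ f : M ⟶ N, ∃ (F : ModuleCat.{u} R) (h : M ⟶ F) (k : F ⟶ N),
    IsFlat (R := R) ↥F ∧ h ≫ k = f

/-- `N` belongs to the subprojectivity domain `Pr⁻¹(M)` of `M`:
every morphism `M ⟶ N` factors through a projective module. -/
def ProjDom (M N : ModuleCat.{u} R) : Prop :=
  ∀ f : M ⟶ N, ∃ (P : ModuleCat.{u} R) (h : M ⟶ P) (k : P ⟶ N),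
    Module.Projective R ↥P ∧ h ≫ k = f

lemma RTensor.mk_op_smul_tmul {W M : Type u} [AddCommGroup W] [Module Rᵐᵒᵖ W]
    [AddCommGroup M] [Module R M] (w : W) (r : R) (m : M) :
    (Submodule.Quotient.mk ((MulOpposite.op r • w) ⊗ₜ[ℤ] m) : RTensor (R := R) W M) =
      Submodule.Quotient.mk (w ⊗ₜ[ℤ] (r • m)) :=
  (Submodule.Quotient.eq _).2 (Submodule.subset_span ⟨w, r, m, rfl⟩)

section Functoriality

variable {M M' : Type u} [AddCommGroup M] [Module R M] [AddCommGroup M'] [Module R M']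

noncomputable def tensorMapRight (g : M →ₗ[R] M') (W : Type u) [AddCommGroup W] [Module Rᵐᵒᵖ W] :
    RTensor (R := R) W M →ₗ[ℤ] RTensor (R := R) W M' :=
  Submodule.mapQ _ _ (LinearMap.lTensor W g.toAddMonoidHom.toIntLinearMap) (by
    refine Submodule.span_le.2 ?_
    rintro x ⟨w, r, m, rfl⟩
    refine Submodule.mem_comap.2 (Submodule.subset_span ⟨w, r, g m, ?_⟩)
    exact (map_sub (LinearMap.lTensor W g.toAddMonoidHom.toIntLinearMap) _ _).trans (by simp))

lemma tensorMap_comp_tensorMapRight {W K : Type u} [AddCommGroup W] [Module Rᵐᵒᵖ W]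
    [AddCommGroup K] [Module Rᵐᵒᵖ K] (i : W →ₗ[Rᵐᵒᵖ] K) (g : M →ₗ[R] M') :
    (tensorMap (R := R) i M').comp (tensorMapRight g W) =
      (tensorMapRight g K).comp (tensorMap (R := R) i M) :=
  Submodule.linearMap_qext _ (TensorProduct.ext' fun _ _ => rfl)

lemma tensorMapRight_leftInverse {s : M →ₗ[R] M'} {p : M' →ₗ[R] M}
    (h : Function.LeftInverse p s) (W : Type u) [AddCommGroup W] [Module Rᵐᵒᵖ W] :
    Function.LeftInverse (tensorMapRight p W) (tensorMapRight s W) := by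
  have hcomp : (tensorMapRight p W).comp (tensorMapRight s W) = LinearMap.id := by
    refine Submodule.linearMap_qext _ (TensorProduct.ext' fun w m => ?_)
    show Submodule.Quotient.mk (w ⊗ₜ[ℤ] p (s m)) = _
    rw [h m]
    rfl
  exact fun x => DFunLike.congr_fun hcomp x

lemma isFlat_of_leftInverse {F : Type u} [AddCommGroup F] [Module R F]
    {s : M →ₗ[R] F} {p : F →ₗ[R] M} (h : Function.LeftInverse p s)
    (hF : IsFlat (R := R) F) : IsFlat (R := R) M := by
  intro W K _ _ _ _ i hi
  have hinj : Function.Injective ((tensorMap (R := R) i F).comp (tensorMapRight s W)) :=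
    (hF W K i hi).comp (tensorMapRight_leftInverse h W).injective
  rw [tensorMap_comp_tensorMapRight, LinearMap.coe_comp] at hinj
  exact hinj.of_comp

end Functoriality

section Free

variable {ι : Type u} {W K : Type u} [AddCommGroup W] [Module Rᵐᵒᵖ W]
  [AddCommGroup K] [Module Rᵐᵒᵖ K]

noncomputable def finsuppSmulBilin : W →ₗ[ℤ] (ι →₀ R) →ₗ[ℤ] (ι →₀ W) :=
  LinearMap.mk₂ ℤ (fun w f => f.mapRange (fun r => MulOpposite.op r • w) (zero_smul _ w))
    (fun _ _ _ => by ext; simp [smul_add])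
    (fun _ _ _ => by
      ext
      simp only [Finsupp.mapRange_apply, Finsupp.smul_apply]
      exact smul_comm _ _ _)
    (fun _ _ _ => by ext; simp [add_smul])
    (fun z _ _ => by ext; simp [mul_smul, Int.cast_smul_eq_zsmul, smul_comm z])

noncomputable def rTensorFinsuppToFinsupp : RTensor (R := R) W (ι →₀ R) →ₗ[ℤ] (ι →₀ W) :=
  Submodule.liftQ _ (TensorProduct.lift finsuppSmulBilin) (by
    refine Submodule.span_le.2 ?_
    rintro x ⟨w, r, f, rfl⟩
    show TensorProduct.lift finsuppSmulBilin (_ - _) = 0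
    rw [map_sub, TensorProduct.lift.tmul, TensorProduct.lift.tmul, sub_eq_zero]
    ext j
    simp [finsuppSmulBilin, smul_smul])

noncomputable def finsuppToRTensorFinsupp : (ι →₀ W) →ₗ[ℤ] RTensor (R := R) W (ι →₀ R) :=
  Finsupp.lsum ℤ fun j =>
    (Submodule.mkQ _).comp ((TensorProduct.mk ℤ W (ι →₀ R)).flip (Finsupp.single j 1))

lemma rTensorFinsuppToFinsupp_mk_tmul (w : W) (f : ι →₀ R) :
    rTensorFinsuppToFinsupp (Submodule.Quotient.mk (w ⊗ₜ[ℤ] f) : RTensor (R := R) W (ι →₀ R)) =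
      f.mapRange (fun r => MulOpposite.op r • w) (zero_smul _ w) :=
  TensorProduct.lift.tmul (f' := finsuppSmulBilin) w f

lemma finsuppToRTensorFinsupp_single (j : ι) (w : W) :
    finsuppToRTensorFinsupp (Finsupp.single j w) =
      (Submodule.Quotient.mk (w ⊗ₜ[ℤ] Finsupp.single j 1) : RTensor (R := R) W (ι →₀ R)) := by
  rw [finsuppToRTensorFinsupp, Finsupp.lsum_single]
  rfl

lemma finsuppToRTensorFinsupp_leftInverse :
    Function.LeftInverse (finsuppToRTensorFinsupp (R := R) (W := W) (ι := ι))
      rTensorFinsuppToFinsupp := by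
  intro x
  obtain ⟨y, rfl⟩ := Submodule.Quotient.mk_surjective _ x
  induction y using TensorProduct.induction_on with
  | zero => simp
  | add a b ha hb => rw [Submodule.Quotient.mk_add, map_add, map_add, ha, hb]
  | tmul w f =>
    induction f using Finsupp.induction_linear with
    | zero => simp
    | add f g hf hg =>
      rw [TensorProduct.tmul_add, Submodule.Quotient.mk_add, map_add, map_add, hf, hg]
    | single j r =>
      rw [rTensorFinsuppToFinsupp_mk_tmul, Finsupp.mapRange_single,
        finsuppToRTensorFinsupp_single, RTensor.mk_op_smul_tmul, Finsupp.smul_single_one]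

lemma rTensorFinsuppToFinsupp_comp_tensorMap (i : W →ₗ[Rᵐᵒᵖ] K) :
    rTensorFinsuppToFinsupp.comp (tensorMap (R := R) i (ι →₀ R)) =
      (Finsupp.mapRange.linearMap i.toAddMonoidHom.toIntLinearMap).comp
        rTensorFinsuppToFinsupp := by
  refine Submodule.linearMap_qext _ (TensorProduct.ext' fun w f => ?_)
  show rTensorFinsuppToFinsupp (Submodule.Quotient.mk (i w ⊗ₜ[ℤ] f)) =
    Finsupp.mapRange.linearMap _ (rTensorFinsuppToFinsupp (Submodule.Quotient.mk (w ⊗ₜ[ℤ] f)))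
  ext j
  simp [rTensorFinsuppToFinsupp_mk_tmul]

lemma isFlat_finsupp : IsFlat (R := R) (ι →₀ R) := by
  intro W K _ _ _ _ i hi
  have hmap : Function.Injective (Finsupp.mapRange.linearMap (α := ι)
      i.toAddMonoidHom.toIntLinearMap) :=
    Finsupp.mapRange_injective _ (map_zero i) hi
  have hinj : Function.Injective ((Finsupp.mapRange.linearMap (α := ι)
      i.toAddMonoidHom.toIntLinearMap).comp (rTensorFinsuppToFinsupp (R := R))) :=
    hmap.comp finsuppToRTensorFinsupp_leftInverse.injective
  rw [← rTensorFinsuppToFinsupp_comp_tensorMap, LinearMap.coe_comp] at hinj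
  exact hinj.of_comp

end Free

lemma isFlat_of_projective {M : Type u} [AddCommGroup M] [Module R M]
    [Module.Projective R M] : IsFlat (R := R) M :=
  have ⟨_, hs⟩ := ‹Module.Projective R M›.out
  isFlat_of_leftInverse hs isFlat_finsupp

section Domains

variable {M N : ModuleCat.{u} R}

lemma ProjDom.flatDom (h : ProjDom M N) : FlatDom M N := fun f =>
  have ⟨P, g, k, _, hgk⟩ := h f
  ⟨P, g, k, isFlat_of_projective, hgk⟩

lemma FlatDom.projDom
    (hperfect : ∀ F : ModuleCat.{u} R, IsFlat (R := R) F → Module.Projective R F)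
    (h : FlatDom M N) : ProjDom M N := fun f =>
  have ⟨F, g, k, hF, hgk⟩ := h f
  ⟨F, g, k, hperfect F hF, hgk⟩

lemma flatDom_self_of_isFlat (hM : IsFlat (R := R) M) : FlatDom M M := fun f =>
  ⟨M, 𝟙 M, f, hM, Category.id_comp f⟩

lemma projective_of_projDom_self (h : ProjDom M M) : Module.Projective R M := by
  obtain ⟨P, g, k, _, hgk⟩ := h (𝟙 M)
  refine Module.Projective.of_split g.hom k.hom ?_
  rw [← ModuleCat.hom_comp, hgk, ModuleCat.hom_id]

end Domains

theorem stmt_12 :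
    [∀ F : ModuleCat.{u} R, IsFlat (R := R) ↥F → Module.Projective R ↥F,
      ∀ M N : ModuleCat.{u} R, FlatDom M N ↔ ProjDom M N,
      ∀ M N : ModuleCat.{u} R, FlatDom M N → ProjDom M N].TFAE := by
  tfae_have 1 → 2 := fun hperfect _ _ => ⟨FlatDom.projDom hperfect, ProjDom.flatDom⟩
  tfae_have 2 → 3 := fun h M N => (h M N).1
  tfae_have 3 → 1 := fun h F hF => projective_of_projDom_self (h F F (flatDom_self_of_isFlat hF))
  tfae_finish
end
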